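/- Define α(n,i) = (1/2) Σ_{k=0}^{i} (k!/2^k) C(n,k) C(n-1,k) s(n-k, n-i) for natural numbers n ≥ 1 and i ≥ 0. Then for every odd i (i = 2j+1), α(n,i) = 0. -/
import Mathlib

open Polynomial Finset

/-- Signed Stirling numbers of the first kind. -/
noncomputable def stirlingFirst (n i : ℕ) : ℤ := (descPochhammer ℤ n).coeff i

/-- The coefficients `α(n,i)` of the symmetric Weyl-ordering expression. -/
noncomputable def alpha (n i : ℕ) : ℚ :=
  (1 / 2) * ∑ k ∈ Finset.range (i + 1),
    (k.factorial : ℚ) / 2 ^ k * (n.choose k : ℚ) * ((n - 1).choose k : ℚ) *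
      (stirlingFirst (n - k) (n - i) : ℚ)

noncomputable def cc (n k : ℕ) : ℚ :=
  (k.factorial : ℚ) / 2 ^ k * (n.choose k : ℚ) * ((n - 1).choose k : ℚ)

noncomputable def QQ (n : ℕ) : Polynomial ℚ :=
  ∑ k ∈ range (n + 1), Polynomial.C (cc n k) * descPochhammer ℚ (n - k)

lemma cc_rec0 (m : ℕ) : cc (m + 2) 0 = cc (m + 1) 0 := by simp [cc]

lemma cc_rec1 (m : ℕ) : cc (m + 2) 1 = cc (m + 1) 1 + ((m + 1 : ℕ) : ℚ) * cc (m + 1) 0 := by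
  simp only [cc, Nat.factorial_one, Nat.choose_one_right, Nat.add_sub_cancel,
    Nat.factorial_zero, Nat.choose_zero_right, pow_one, pow_zero]
  push_cast
  ring

lemma cc_rec2 (m k : ℕ) :
    cc (m + 2) (k + 2) = cc (m + 1) (k + 2) + ((m - k : ℕ) : ℚ) * cc (m + 1) (k + 1)
      + ((m + 1 : ℚ) * m / 4) * cc m k := by
  rcases Nat.lt_or_ge m (k + 1) with h | h
  · -- m ≤ k : everything vanishes
    have h1 : (m + 1).choose (k + 2) = 0 := Nat.choose_eq_zero_of_lt (by omega)
    have h2 : m.choose (k + 1) = 0 := Nat.choose_eq_zero_of_lt (by omega)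
    have h3 : (m - k : ℕ) = 0 := by omega
    rcases Nat.eq_zero_or_pos m with hm | hm
    · subst hm
      simp [cc, h1, h2, h3]
    · have h4 : (m - 1).choose k = 0 := Nat.choose_eq_zero_of_lt (by omega)
      simp [cc, h1, h2, h3, h4]
  rcases Nat.eq_or_lt_of_le h with h | h
  · -- m = k + 1
    subst h
    simp only [cc]
    have e1 : k + 1 + 2 - 1 = k + 2 := by omega
    have e2 : k + 1 + 1 - 1 = k + 1 := by omega
    have e3 : k + 1 - 1 = k := by omega
    have e4 : k + 1 - k = 1 := by omega
    rw [e1, e2, e3, e4]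
    rw [show k + 1 + 2 = (k + 2) + 1 from rfl, show k + 1 + 1 = (k + 1) + 1 from rfl]
    rw [Nat.choose_succ_self_right, Nat.choose_self, Nat.choose_succ_self_right,
      Nat.choose_self, Nat.choose_succ_self_right, Nat.choose_self]
    rw [Nat.choose_eq_zero_of_lt (by omega : k + 1 < k + 2)]
    rw [show (k+2).factorial = (k+2) * (k+1) * k.factorial from by
      rw [Nat.factorial_succ, Nat.factorial_succ]; ring,
      show (k+1).factorial = (k+1) * k.factorial from Nat.factorial_succ k]
    have hk : (k.factorial : ℚ) ≠ 0 := by exact_mod_cast k.factorial_ne_zero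
    have h2 : (2 : ℚ) ^ k ≠ 0 := by positivity
    push_cast
    field_simp
    ring
  · -- m ≥ k + 2 : generic; write m = k + a + 2
    obtain ⟨a, rfl⟩ : ∃ a, m = k + a + 2 := ⟨m - k - 2, by omega⟩
    simp only [cc]
    have e1 : k + a + 2 + 2 - 1 = k + a + 3 := by omega
    have e2 : k + a + 2 + 1 - 1 = k + a + 2 := by omega
    have e3 : k + a + 2 - 1 = k + a + 1 := by omega
    have e4 : k + a + 2 - k = a + 2 := by omega
    rw [e1, e2, e3, e4]
    have c1 : (((k + a + 2 + 2).choose (k + 2) : ℕ) : ℚ)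
        = ((k + a + 4).factorial : ℚ) / ((k + 2).factorial * (a + 2).factorial) := by
      rw [show k + a + 2 + 2 = k + a + 4 from by omega, Nat.cast_choose ℚ (by omega),
        show k + a + 4 - (k + 2) = a + 2 from by omega]
    have c2 : (((k + a + 3).choose (k + 2) : ℕ) : ℚ)
        = ((k + a + 3).factorial : ℚ) / ((k + 2).factorial * (a + 1).factorial) := by
      rw [Nat.cast_choose ℚ (by omega), show k + a + 3 - (k + 2) = a + 1 from by omega]
    have c3 : (((k + a + 2 + 1).choose (k + 2) : ℕ) : ℚ)
        = ((k + a + 3).factorial : ℚ) / ((k + 2).factorial * (a + 1).factorial) := by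
      rw [show k + a + 2 + 1 = k + a + 3 from by omega]; exact c2
    have c4 : (((k + a + 2).choose (k + 2) : ℕ) : ℚ)
        = ((k + a + 2).factorial : ℚ) / ((k + 2).factorial * a.factorial) := by
      rw [Nat.cast_choose ℚ (by omega), show k + a + 2 - (k + 2) = a from by omega]
    have c5 : (((k + a + 2 + 1).choose (k + 1) : ℕ) : ℚ)
        = ((k + a + 3).factorial : ℚ) / ((k + 1).factorial * (a + 2).factorial) := by
      rw [show k + a + 2 + 1 = k + a + 3 from by omega, Nat.cast_choose ℚ (by omega),
        show k + a + 3 - (k + 1) = a + 2 from by omega]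
    have c6 : (((k + a + 2).choose (k + 1) : ℕ) : ℚ)
        = ((k + a + 2).factorial : ℚ) / ((k + 1).factorial * (a + 1).factorial) := by
      rw [Nat.cast_choose ℚ (by omega), show k + a + 2 - (k + 1) = a + 1 from by omega]
    have c7 : (((k + a + 2).choose k : ℕ) : ℚ)
        = ((k + a + 2).factorial : ℚ) / (k.factorial * (a + 2).factorial) := by
      rw [Nat.cast_choose ℚ (by omega), show k + a + 2 - k = a + 2 from by omega]
    have c8 : (((k + a + 1).choose k : ℕ) : ℚ)
        = ((k + a + 1).factorial : ℚ) / (k.factorial * (a + 1).factorial) := by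
      rw [Nat.cast_choose ℚ (by omega), show k + a + 1 - k = a + 1 from by omega]
    simp only [c1, c2, c3, c4, c5, c6, c7, c8]
    -- reduce the big factorials
    have f1 : ((k + a + 4).factorial : ℚ)
        = (k + a + 4) * (k + a + 3) * (k + a + 2) * ((k + a + 1).factorial : ℚ) := by
      rw [show k + a + 4 = (k + a + 3) + 1 from rfl, Nat.factorial_succ,
        show k + a + 3 = (k + a + 2) + 1 from rfl, Nat.factorial_succ,
        show k + a + 2 = (k + a + 1) + 1 from rfl, Nat.factorial_succ]
      push_cast; ring
    have f2 : ((k + a + 3).factorial : ℚ)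
        = (k + a + 3) * (k + a + 2) * ((k + a + 1).factorial : ℚ) := by
      rw [show k + a + 3 = (k + a + 2) + 1 from rfl, Nat.factorial_succ,
        show k + a + 2 = (k + a + 1) + 1 from rfl, Nat.factorial_succ]
      push_cast; ring
    have f3 : ((k + a + 2).factorial : ℚ)
        = (k + a + 2) * ((k + a + 1).factorial : ℚ) := by
      rw [show k + a + 2 = (k + a + 1) + 1 from rfl, Nat.factorial_succ]
      push_cast; ring
    have g1 : ((k + 2).factorial : ℚ) = (k + 2) * (k + 1) * (k.factorial : ℚ) := by
      rw [show k + 2 = (k + 1) + 1 from rfl, Nat.factorial_succ, Nat.factorial_succ]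
      push_cast; ring
    have g2 : ((k + 1).factorial : ℚ) = (k + 1) * (k.factorial : ℚ) := by
      rw [Nat.factorial_succ]; push_cast; ring
    have g3 : ((a + 2).factorial : ℚ) = (a + 2) * (a + 1) * (a.factorial : ℚ) := by
      rw [show a + 2 = (a + 1) + 1 from rfl, Nat.factorial_succ, Nat.factorial_succ]
      push_cast; ring
    have g4 : ((a + 1).factorial : ℚ) = (a + 1) * (a.factorial : ℚ) := by
      rw [Nat.factorial_succ]; push_cast; ring
    rw [f1, f2, f3, g1, g2, g3, g4]
    have hk : (k.factorial : ℚ) ≠ 0 := by exact_mod_cast k.factorial_ne_zero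
    have ha : (a.factorial : ℚ) ≠ 0 := by exact_mod_cast a.factorial_ne_zero
    have hkk : ((k + a + 1).factorial : ℚ) ≠ 0 := by
      exact_mod_cast (k + a + 1).factorial_ne_zero
    have h2 : (2 : ℚ) ^ k ≠ 0 := by positivity
    push_cast
    field_simp
    ring

lemma QQ_rec (m : ℕ) :
    QQ (m + 2) = X * QQ (m + 1) + Polynomial.C ((m + 1 : ℚ) * m / 4) * QQ m := by
  classical
  have key : ∀ t : ℕ, (X : ℚ[X]) * descPochhammer ℚ t
      = descPochhammer ℚ (t + 1) + Polynomial.C (t : ℚ) * descPochhammer ℚ t := by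
    intro t
    rw [descPochhammer_succ_right, Polynomial.C_eq_natCast]
    ring
  set G : ℕ → ℚ[X] := fun k => match k with
    | 0 => 0
    | k + 1 => Polynomial.C (((m + 1 - k : ℕ) : ℚ) * cc (m + 1) k)
        * descPochhammer ℚ (m + 1 - k) with hG
  set H : ℕ → ℚ[X] := fun k => match k with
    | 0 => 0
    | 1 => 0
    | k + 2 => Polynomial.C (((m + 1 : ℚ) * m / 4) * cc m k)
        * descPochhammer ℚ (m - k) with hH
  have hXQ : X * QQ (m + 1)
      = (∑ k ∈ range (m + 2), Polynomial.C (cc (m + 1) k) * descPochhammer ℚ (m + 2 - k))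
        + ∑ k ∈ range (m + 2), G (k + 1) := by
    rw [QQ, Finset.mul_sum, ← Finset.sum_add_distrib]
    refine Finset.sum_congr rfl fun k hk => ?_
    have hk' : k ≤ m + 1 := Nat.lt_succ_iff.mp (Finset.mem_range.mp hk)
    have h1 : m + 1 - k + 1 = m + 2 - k := by omega
    calc X * (Polynomial.C (cc (m + 1) k) * descPochhammer ℚ (m + 1 - k))
        = Polynomial.C (cc (m + 1) k) * (X * descPochhammer ℚ (m + 1 - k)) := by ring
      _ = _ := by
          rw [key, h1, hG]
          simp only [map_mul]
          ring
  have hCQ : Polynomial.C ((m + 1 : ℚ) * m / 4) * QQ m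
      = ∑ k ∈ range (m + 1), H (k + 2) := by
    rw [QQ, Finset.mul_sum]
    refine Finset.sum_congr rfl fun k hk => ?_
    rw [hH]
    simp only [map_mul]
    ring
  have hGsum : ∑ k ∈ range (m + 3), G k = ∑ k ∈ range (m + 2), G (k + 1) := by
    rw [Finset.sum_range_succ' G (m + 2)]
    simp [hG]
  have hHsum : ∑ k ∈ range (m + 3), H k = ∑ k ∈ range (m + 1), H (k + 2) := by
    rw [Finset.sum_range_succ' H (m + 2), Finset.sum_range_succ' (fun k => H (k + 1)) (m + 1)]
    simp [hH]
  have hmid : ∑ k ∈ range (m + 3), Polynomial.C (cc (m + 1) k) * descPochhammer ℚ (m + 2 - k)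
      = ∑ k ∈ range (m + 2), Polynomial.C (cc (m + 1) k) * descPochhammer ℚ (m + 2 - k) := by
    rw [Finset.sum_range_succ]
    have : cc (m + 1) (m + 2) = 0 := by
      simp [cc, Nat.choose_eq_zero_of_lt (by omega : m + 1 < m + 2)]
    simp [this]
  rw [hXQ, hCQ, ← hGsum, ← hHsum, ← hmid, QQ, ← Finset.sum_add_distrib,
    ← Finset.sum_add_distrib]
  refine Finset.sum_congr rfl fun k _ => ?_
  match k with
  | 0 =>
    simp only [hG, hH, cc_rec0]
    simp
  | 1 =>
    have h1 : m + 1 - 0 = m + 1 := by omega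
    simp only [hG, hH, h1]
    rw [cc_rec1]
    simp only [map_add, map_mul]
    have h2 : m + 2 - 1 = m + 1 := by omega
    rw [h2]
    ring
  | (j + 2) =>
    have h1 : m + 2 - (j + 2) = m - j := by omega
    have h2 : m + 1 - (j + 1) = m - j := by omega
    simp only [hG, hH, h1, h2]
    rw [cc_rec2]
    simp only [map_add, map_mul]
    ring

lemma QQ_coeff_eq_zero : ∀ n i : ℕ, (n + i) % 2 = 1 → (QQ n).coeff i = 0 := by
  intro n
  induction n using Nat.strong_induction_on with
  | _ n ih =>
    match n with
    | 0 =>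
      intro i hi
      have : QQ 0 = 1 := by simp [QQ, cc]
      rw [this]
      have : i ≠ 0 := by omega
      simp [Polynomial.coeff_one, this]
    | 1 =>
      intro i hi
      have h1 : QQ 1 = X := by
        rw [QQ]
        rw [Finset.sum_range_succ, Finset.sum_range_succ, Finset.sum_range_zero]
        simp [cc, descPochhammer_one]
      rw [h1]
      have : i ≠ 1 := by omega
      simp only [Polynomial.coeff_X]
      simp [Ne.symm this]
    | (m + 2) =>
      intro i hi
      rw [QQ_rec]
      rw [Polynomial.coeff_add, Polynomial.coeff_C_mul]
      have h2 : (QQ m).coeff i = 0 := ih m (by omega) i (by omega)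
      rw [h2, mul_zero, add_zero]
      match i with
      | 0 => simp [Polynomial.coeff_zero, Polynomial.mul_coeff_zero]
      | (j + 1) =>
        rw [Polynomial.coeff_X_mul]
        exact ih (m + 1) (by omega) j (by omega)

lemma alpha_eq_coeff (n i : ℕ) (hn : 1 ≤ n) (hi : i ≤ n) :
    alpha n i = (1 / 2) * (QQ n).coeff (n - i) := by
  rw [alpha, QQ, Polynomial.finset_sum_coeff]
  congr 1
  rw [← Finset.sum_subset (Finset.range_subset_range.mpr (by omega : i + 1 ≤ n + 1))]
  · refine Finset.sum_congr rfl fun k hk => ?_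
    rw [Polynomial.coeff_C_mul, cc]
    congr 1
    rw [stirlingFirst, ← descPochhammer_map (Int.castRingHom ℚ) (n - k),
      Polynomial.coeff_map]
    simp
  · intro k hk hk'
    have hki : i < k := by
      simp only [Finset.mem_range] at hk hk'
      omega
    have hkn : k ≤ n := by
      simp only [Finset.mem_range] at hk
      omega
    rw [Polynomial.coeff_C_mul]
    have : (descPochhammer ℚ (n - k)).coeff (n - i) = 0 := by
      apply Polynomial.coeff_eq_zero_of_natDegree_lt
      rw [descPochhammer_natDegree]
      omega
    rw [this, mul_zero]

theorem alpha_odd_eq_zero (n : ℕ) (hn : 1 ≤ n) (j : ℕ) : alpha n (2 * j + 1) = 0 := by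
  rcases Nat.lt_or_ge n (2 * j + 1) with h | h
  · -- i > n : every term vanishes
    rw [alpha]
    rw [Finset.sum_eq_zero, mul_zero]
    intro k hk
    rcases Nat.lt_or_ge k n with hkn | hkn
    · have h0 : n - (2 * j + 1) = 0 := by omega
      have : stirlingFirst (n - k) (n - (2 * j + 1)) = 0 := by
        have hne : ¬ n - k = 0 := by omega
        rw [stirlingFirst, h0, Polynomial.coeff_zero_eq_eval_zero]
        simp [descPochhammer_eval_zero, hne]
      rw [this]
      simp
    · have : (n - 1).choose k = 0 := Nat.choose_eq_zero_of_lt (by omega)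
      rw [this]
      simp
  · rw [alpha_eq_coeff n (2 * j + 1) hn h]
    rw [QQ_coeff_eq_zero n (n - (2 * j + 1)) (by omega), mul_zero]
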